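/- arXiv:1505.08050 — 3 statements merged into one kernel-verified Lean document; each statement's English description precedes it below -/
import Mathlib

section
/- Let ε > 0, M > 0, and let F, G : [-√ε, √ε] → ℝ be functions such that (a) F(t) ≥ G(t) - ε for all t in [-√ε, √ε] and |F(0) - G(0)| ≤ ε; (b) F is concave on [-√ε, √ε] and differentiable at 0; (c) G is differentiable on [-√ε, √ε] and its derivative satisfies |G'(t) - G'(0)| ≤ M√ε for all t in [-√ε, √ε]. Then |F'(0) - G'(0)| ≤ (2 + M)√ε. -/
open Set Real

/-!
A concave function lies below its tangent line, while a function whose derivative oscillates by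
at most `M √ε` lies above its own tangent line up to an error `M √ε · |t|`. Comparing `F` and `G`
at `t = ±√ε`, where `F ≥ G - ε` and `F(0) ≤ G(0) + ε`, bounds `±(G'(0) - F'(0)) √ε` by
`2ε + M ε = (2 + M) √ε · √ε`.
-/

lemma ConcaveOn.le_add_mul_sub_of_hasDerivAt {S : Set ℝ} {f : ℝ → ℝ} {f' x y : ℝ}
    (hfc : ConcaveOn ℝ S f) (hx : x ∈ S) (hy : y ∈ S) (hf : HasDerivAt f f' x) :
    f y ≤ f x + f' * (y - x) := by
  rcases lt_trichotomy x y with hxy | rfl | hyx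
  · have := hfc.slope_le_of_hasDerivAt hx hy hxy hf
    rw [slope_def_field, div_le_iff₀ (sub_pos.mpr hxy)] at this
    linarith
  · simp
  · have := hfc.le_slope_of_hasDerivAt hy hx hyx hf
    rw [slope_def_field, le_div_iff₀ (sub_pos.mpr hyx)] at this
    linarith

lemma Convex.abs_sub_sub_mul_le_of_abs_deriv_sub_le {S : Set ℝ} {f f' : ℝ → ℝ} {C x y : ℝ}
    (hS : Convex ℝ S) (hf : ∀ t ∈ S, HasDerivWithinAt f (f' t) S t)
    (bound : ∀ t ∈ S, |f' t - f' x| ≤ C) (hx : x ∈ S) (hy : y ∈ S) :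
    |f y - f x - f' x * (y - x)| ≤ C * |y - x| := by
  have hg : ∀ t ∈ S, HasDerivWithinAt (fun u ↦ f u - f' x * u) (f' t - f' x) S t :=
    fun t ht ↦ (hf t ht).sub ((hasDerivWithinAt_id t S).const_mul (f' x)) |>.congr_deriv (by simp)
  have := hS.norm_image_sub_le_of_norm_hasDerivWithin_le hg bound hx hy
  simp only [Real.norm_eq_abs] at this
  convert this using 2
  ring

lemma ConcaveOn.deriv_sub_mul_sub_le {S : Set ℝ} {F G G' : ℝ → ℝ} {F' C ε x y : ℝ}
    (hFc : ConcaveOn ℝ S F) (hF : HasDerivAt F F' x)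
    (hG : ∀ t ∈ S, HasDerivWithinAt G (G' t) S t) (hG' : ∀ t ∈ S, |G' t - G' x| ≤ C)
    (hFG : ∀ t ∈ S, G t - ε ≤ F t) (hFx : F x ≤ G x + ε) (hx : x ∈ S) (hy : y ∈ S) :
    (G' x - F') * (y - x) ≤ 2 * ε + C * |y - x| := by
  have hF_tangent := hFc.le_add_mul_sub_of_hasDerivAt hx hy hF
  have hG_tangent :=
    (abs_le.mp (hFc.1.abs_sub_sub_mul_le_of_abs_deriv_sub_le hG hG' hx hy)).1
  linarith [hFG y hy]

theorem stmt0_general (ε M : ℝ) (hε : 0 < ε) (F G : ℝ → ℝ)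
    (F'0 : ℝ) (G' : ℝ → ℝ)
    (hFG : ∀ t ∈ Icc (-Real.sqrt ε) (Real.sqrt ε), G t - ε ≤ F t)
    (h0 : |F 0 - G 0| ≤ ε)
    (hFconc : ConcaveOn ℝ (Icc (-Real.sqrt ε) (Real.sqrt ε)) F)
    (hF : HasDerivAt F F'0 0)
    (hG : ∀ t ∈ Icc (-Real.sqrt ε) (Real.sqrt ε),
      HasDerivWithinAt G (G' t) (Icc (-Real.sqrt ε) (Real.sqrt ε)) t)
    (hG' : ∀ t ∈ Icc (-Real.sqrt ε) (Real.sqrt ε),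
      |G' t - G' 0| ≤ M * Real.sqrt ε) :
    |F'0 - G' 0| ≤ (2 + M) * Real.sqrt ε := by
  set s := Real.sqrt ε
  have hs : 0 < s := Real.sqrt_pos.mpr hε
  have hss : s * s = ε := Real.mul_self_sqrt hε.le
  have hFx : F 0 ≤ G 0 + ε := by linarith [(abs_le.mp h0).2]
  have h0_mem : (0 : ℝ) ∈ Icc (-s) s := ⟨by linarith, hs.le⟩
  have key := fun y (hy : y ∈ Icc (-s) s) ↦
    hFconc.deriv_sub_mul_sub_le hF hG hG' hFG hFx h0_mem hy
  have h_right := key s ⟨by linarith, le_rfl⟩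
  have h_left := key (-s) ⟨le_rfl, by linarith⟩
  simp only [sub_zero, abs_neg, abs_of_pos hs] at h_right h_left
  refine abs_le.mpr ⟨?_, ?_⟩ <;> nlinarith

/-- Quantitative comparison of derivatives: if `F ≥ G - ε` on `[-√ε, √ε]`,
`|F 0 - G 0| ≤ ε`, `F` is concave on the interval and differentiable at `0`,
and `G` is differentiable on the interval with `|G' t - G' 0| ≤ M √ε`, then
`|F'(0) - G'(0)| ≤ (2 + M) √ε`. -/
theorem stmt0 (ε M : ℝ) (hε : 0 < ε) (hM : 0 < M) (F G : ℝ → ℝ)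
    (F'0 : ℝ) (G' : ℝ → ℝ)
    (hFG : ∀ t ∈ Icc (-Real.sqrt ε) (Real.sqrt ε), G t - ε ≤ F t)
    (h0 : |F 0 - G 0| ≤ ε)
    (hFconc : ConcaveOn ℝ (Icc (-Real.sqrt ε) (Real.sqrt ε)) F)
    (hF : HasDerivAt F F'0 0)
    (hG : ∀ t ∈ Icc (-Real.sqrt ε) (Real.sqrt ε),
      HasDerivWithinAt G (G' t) (Icc (-Real.sqrt ε) (Real.sqrt ε)) t)
    (hG' : ∀ t ∈ Icc (-Real.sqrt ε) (Real.sqrt ε),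
      |G' t - G' 0| ≤ M * Real.sqrt ε) :
    |F'0 - G' 0| ≤ (2 + M) * Real.sqrt ε :=
  stmt0_general ε M hε F G F'0 G' hFG h0 hFconc hF hG hG'
end

section
/- Let ε > 0, M > 0, and let F, G : [-√ε, √ε] → ℝ satisfy: F is concave on [-√ε, √ε] and differentiable at 0; G is differentiable on [-√ε, √ε] with |G'(t) - G'(0)| ≤ M|t| for all t; F(t) ≥ G(t) - ε on the interval; and |F(0) - G(0)| ≤ ε. Then F'(0) ≥ G'(0) - (2 + M)√ε. -/
/-!
Concavity puts the chord slope `(F √ε - F 0) / √ε` below `F'(0)`. The mean value inequality for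
`t ↦ G t - G'(0) t`, whose derivative is at most `M √ε` on `[0, √ε]`, gives
`G √ε ≥ G 0 + G'(0) √ε - M ε`, and the two comparisons between `F` and `G` cost `2ε` more in the
numerator of the chord slope.
-/

open Set Real

theorem abs_sub_sub_deriv_mul_le_of_abs_deriv_sub_le {G G' : ℝ → ℝ} {a b C : ℝ} (hab : a ≤ b)
    (hG : ∀ x ∈ Icc a b, HasDerivWithinAt G (G' x) (Icc a b) x)
    (hC : ∀ x ∈ Ico a b, |G' x - G' a| ≤ C) :
    |G b - G a - G' a * (b - a)| ≤ C * (b - a) := by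
  have hlin : ∀ x ∈ Icc a b,
      HasDerivWithinAt (fun t ↦ G t - G' a * t) (G' x - G' a) (Icc a b) x := fun x hx ↦
    ((hG x hx).sub ((hasDerivAt_id x).const_mul (G' a)).hasDerivWithinAt).congr_deriv (by simp)
  have := norm_image_sub_le_of_norm_deriv_le_segment' hlin hC b (right_mem_Icc.mpr hab)
  rw [Real.norm_eq_abs] at this
  convert this using 2
  ring

/-- One-sided quantitative comparison: under the same setting,
with `|G' t - G' 0| ≤ M |t|`, one has `F'(0) ≥ G'(0) - (2 + M) √ε`. -/
theorem stmt1 (ε M : ℝ) (hε : 0 < ε) (hM : 0 < M) (F G : ℝ → ℝ)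
    (F'0 : ℝ) (G' : ℝ → ℝ)
    (hFconc : ConcaveOn ℝ (Icc (-Real.sqrt ε) (Real.sqrt ε)) F)
    (hF : HasDerivAt F F'0 0)
    (hG : ∀ t ∈ Icc (-Real.sqrt ε) (Real.sqrt ε),
      HasDerivWithinAt G (G' t) (Icc (-Real.sqrt ε) (Real.sqrt ε)) t)
    (hG' : ∀ t ∈ Icc (-Real.sqrt ε) (Real.sqrt ε), |G' t - G' 0| ≤ M * |t|)
    (hFG : ∀ t ∈ Icc (-Real.sqrt ε) (Real.sqrt ε), G t - ε ≤ F t)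
    (h0 : |F 0 - G 0| ≤ ε) :
    G' 0 - (2 + M) * Real.sqrt ε ≤ F'0 := by
  set s := Real.sqrt ε
  have hs : 0 < s := Real.sqrt_pos.mpr hε
  have hss : s * s = ε := Real.mul_self_sqrt hε.le
  have hsub : Icc 0 s ⊆ Icc (-s) s := Icc_subset_Icc (by linarith) le_rfl
  have hsmem : s ∈ Icc (-s) s := ⟨by linarith, le_rfl⟩
  have hchord : (F s - F 0) / s ≤ F'0 := by
    simpa [slope_def_field] using
      hFconc.slope_le_of_hasDerivAt (hsub (left_mem_Icc.mpr hs.le)) hsmem hs hF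
  have hGs : |G s - G 0 - G' 0 * (s - 0)| ≤ M * s * (s - 0) := by
    refine abs_sub_sub_deriv_mul_le_of_abs_deriv_sub_le hs.le
      (fun x hx ↦ (hG x (hsub hx)).mono hsub) fun x hx ↦ ?_
    calc |G' x - G' 0| ≤ M * |x| := hG' x (hsub (Ico_subset_Icc_self hx))
      _ ≤ M * s := by rw [abs_of_nonneg hx.1]; exact mul_le_mul_of_nonneg_left hx.2.le hM.le
  have hnum : (G' 0 - (2 + M) * s) * s ≤ F s - F 0 := by
    nlinarith [(abs_le.mp hGs).1, (abs_le.mp h0).2, hFG s hsmem]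
  exact ((le_div_iff₀ hs).mpr hnum).trans hchord
end

section
/- Let u be a subharmonic function on the open unit disc D(0,1) ⊂ ℂ such that u(z) ≤ C|z - 1|^α for all z on the unit circle (in the sense of boundary values from the Poisson integral bound u(t') ≤ C' ∫_{-π}^{π} (1-|t'|²)/|e^{iθ}-t'|² · |θ|^α dθ for t' ∈ [1/2, 1)), where 0 < α < 1 and C, C' > 0. Then there is a constant c > 0 depending only on α and C' such that u(t') ≤ c(1 - t')^α for all t' ∈ [1/2, 1). -/
/-!
Write `s = 1 - t`. On `[-π, π]` the Poisson kernel `(1 - t²)/|e^{iθ} - t|²` is at most `2/s`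
(as `|e^{iθ} - t| ≥ s`) and at most `π² s/θ²` (as `1 - cos θ ≥ 2θ²/π²`). Splitting the
integral of the kernel against `|θ|^α` at `|θ| = s`, the first bound gives `∫_0^s θ^α/s ≍ s^α`
and the second `s ∫_s^π θ^(α-2) ≲ s^α/(1-α)`, which is where `α < 1` enters.
-/

open Real intervalIntegral

lemma norm_exp_ofReal_mul_I_sub_ofReal_sq (θ t : ℝ) :
    ‖Complex.exp (θ * Complex.I) - t‖ ^ 2 = 1 - 2 * t * cos θ + t ^ 2 := by
  rw [Complex.sq_norm, Complex.normSq_apply]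
  simp only [Complex.sub_re, Complex.sub_im, Complex.exp_ofReal_mul_I_re,
    Complex.exp_ofReal_mul_I_im, Complex.ofReal_re, Complex.ofReal_im, sub_zero]
  nlinarith [sin_sq_add_cos_sq θ]

theorem intervalIntegral.integral_neg_self_eq_two_smul_of_even {E : Type*}
    [NormedAddCommGroup E] [NormedSpace ℝ E] {f : ℝ → E} {a : ℝ} (heven : ∀ x, f (-x) = f x)
    (hf : IntervalIntegrable f MeasureTheory.volume (-a) a) :
    ∫ x in -a..a, f x = (2 : ℝ) • ∫ x in 0..a, f x := by
  have hzero : (0 : ℝ) ∈ Set.uIcc (-a) a := by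
    rcases le_total 0 a with h | h
    · exact Set.mem_uIcc.2 (Or.inl ⟨by linarith, h⟩)
    · exact Set.mem_uIcc.2 (Or.inr ⟨h, by linarith⟩)
  have hleft : ∫ x in -a..0, f x = ∫ x in 0..a, f x := by
    simpa [heven] using (integral_comp_neg (a := 0) (b := a) f).symm
  rw [← integral_add_adjacent_intervals (hf.mono_set (Set.uIcc_subset_uIcc_left hzero))
    (hf.mono_set (Set.uIcc_subset_uIcc_right hzero)), hleft, two_smul]

section PoissonKernel

/-! `1 - 2 t cos θ + t ^ 2 = ‖e^{iθ} - t‖ ^ 2` is the denominator of the Poisson kernel. -/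

variable {t : ℝ}

lemma sq_one_sub_le_poissonDenom (ht : 0 ≤ t) (θ : ℝ) :
    (1 - t) ^ 2 ≤ 1 - 2 * t * cos θ + t ^ 2 := by
  nlinarith [cos_le_one θ]

lemma mul_sq_le_poissonDenom (ht : 0 ≤ t) {θ : ℝ} (hθ : |θ| ≤ π) :
    4 * t * θ ^ 2 ≤ π ^ 2 * (1 - 2 * t * cos θ + t ^ 2) := by
  have hcos : π ^ 2 * cos θ ≤ π ^ 2 - 2 * θ ^ 2 := by
    have := mul_le_mul_of_nonneg_left (cos_le_one_sub_mul_cos_sq hθ) (sq_nonneg π)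
    rwa [mul_sub, mul_one, ← mul_assoc, mul_div_cancel₀ _ (by positivity)] at this
  nlinarith [mul_nonneg (sq_nonneg π) (sq_nonneg (1 - t))]

lemma poissonKernel_le_two_div (ht0 : 0 ≤ t) (ht1 : t < 1) (θ : ℝ) :
    (1 - t ^ 2) / (1 - 2 * t * cos θ + t ^ 2) ≤ 2 / (1 - t) := by
  have hD := sq_one_sub_le_poissonDenom ht0 θ
  have hs : 0 < 1 - t := by linarith
  rw [div_le_div_iff₀ (lt_of_lt_of_le (pow_pos hs 2) hD) hs]
  nlinarith

lemma poissonKernel_le_pi_sq_mul_div (ht0 : 1 / 2 ≤ t) (ht1 : t ≤ 1) {θ : ℝ} (hθ0 : θ ≠ 0)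
    (hθ : |θ| ≤ π) :
    (1 - t ^ 2) / (1 - 2 * t * cos θ + t ^ 2) ≤ π ^ 2 * (1 - t) / θ ^ 2 := by
  have hD := mul_sq_le_poissonDenom (by linarith : (0:ℝ) ≤ t) hθ
  have hθ2 : 0 < θ ^ 2 := by positivity
  have hDpos : 0 < 1 - 2 * t * cos θ + t ^ 2 := by
    nlinarith [mul_pos (by linarith : (0:ℝ) < 4 * t) hθ2]
  rw [div_le_div_iff₀ hDpos hθ2]
  nlinarith [mul_le_mul_of_nonneg_left hD (by linarith : (0:ℝ) ≤ 1 - t),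
    mul_nonneg (mul_nonneg (by linarith : (0:ℝ) ≤ 1 - t) (by linarith : (0:ℝ) ≤ 3 * t - 1))
      hθ2.le]

end PoissonKernel

section RpowIntegrals

variable {α s : ℝ}

lemma integral_div_mul_rpow (hα : -1 < α) (hs : 0 < s) (A : ℝ) :
    ∫ θ in 0..s, A / s * θ ^ α = A / (α + 1) * s ^ α := by
  rw [integral_const_mul, integral_rpow (Or.inl hα), zero_rpow (by linarith), sub_zero,
    rpow_add hs, rpow_one]
  field_simp

lemma integral_mul_rpow_sub_two_le (hα : α < 1) (hs : 0 < s) {b B : ℝ} (hsb : s ≤ b)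
    (hB : 0 ≤ B) :
    ∫ θ in s..b, B * s * θ ^ (α - 2) ≤ B / (1 - α) * s ^ α := by
  have hzero : (0 : ℝ) ∉ Set.uIcc s b := by
    rw [Set.uIcc_of_le hsb]; exact fun h ↦ (not_le.2 hs) h.1
  have hb : 0 < b := hs.trans_le hsb
  rw [integral_const_mul, integral_rpow (Or.inr ⟨by linarith, hzero⟩),
    show α - 2 + 1 = α - 1 by ring]
  have hsα : s * s ^ (α - 1) = s ^ α := by
    conv_rhs => rw [show α = 1 + (α - 1) by ring, rpow_add hs, rpow_one]
  have hbα : 0 ≤ b ^ (α - 1) := rpow_nonneg hb.le _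
  have h1α : 0 < 1 - α := by linarith
  calc B * s * ((b ^ (α - 1) - s ^ (α - 1)) / (α - 1))
      = B / (1 - α) * (s * s ^ (α - 1)) - B / (1 - α) * s * b ^ (α - 1) := by
        rw [← neg_div_neg_eq, neg_sub, neg_sub]; ring
    _ ≤ B / (1 - α) * s ^ α := by
        rw [hsα]; have := mul_nonneg (mul_nonneg (div_nonneg hB h1α.le) hs.le) hbα; linarith

lemma integral_le_of_le_div_mul_rpow_of_le_mul_rpow_sub_two (hα0 : -1 < α) (hα1 : α < 1)
    (hs : 0 < s) {f : ℝ → ℝ} {b A B : ℝ} (hsb : s ≤ b) (hB : 0 ≤ B)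
    (hf : IntervalIntegrable f MeasureTheory.volume 0 b)
    (hnear : ∀ θ ∈ Set.Icc 0 s, f θ ≤ A / s * θ ^ α)
    (hfar : ∀ θ ∈ Set.Icc s b, f θ ≤ B * s * θ ^ (α - 2)) :
    ∫ θ in 0..b, f θ ≤ (A / (α + 1) + B / (1 - α)) * s ^ α := by
  have hzero : (0 : ℝ) ∉ Set.uIcc s b := by
    rw [Set.uIcc_of_le hsb]; exact fun h ↦ (not_le.2 hs) h.1
  have hsmem : s ∈ Set.uIcc 0 b := Set.mem_uIcc.2 (Or.inl ⟨hs.le, hsb⟩)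
  have hnear_int : ∫ θ in 0..s, f θ ≤ A / (α + 1) * s ^ α :=
    integral_div_mul_rpow hα0 hs A ▸ integral_mono_on hs.le
      (hf.mono_set (Set.uIcc_subset_uIcc_left hsmem))
      ((intervalIntegrable_rpow' hα0).const_mul _) hnear
  have hfar_int : ∫ θ in s..b, f θ ≤ B / (1 - α) * s ^ α :=
    (integral_mono_on hsb (hf.mono_set (Set.uIcc_subset_uIcc_right hsmem))
      ((intervalIntegrable_rpow (Or.inr hzero)).const_mul _) hfar).trans
      (integral_mul_rpow_sub_two_le hα1 hs hsb hB)
  rw [← integral_add_adjacent_intervals (hf.mono_set (Set.uIcc_subset_uIcc_left hsmem))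
    (hf.mono_set (Set.uIcc_subset_uIcc_right hsmem))]
  linarith

end RpowIntegrals

theorem integral_poissonKernel_mul_abs_rpow_le {α t : ℝ} (hα0 : 0 ≤ α) (hα1 : α < 1)
    (ht : t ∈ Set.Ico (1 / 2 : ℝ) 1) :
    ∫ θ in -π..π, (1 - t ^ 2) / (1 - 2 * t * cos θ + t ^ 2) * |θ| ^ α
      ≤ 2 * ((2 / (α + 1) + π ^ 2 / (1 - α)) * (1 - t) ^ α) := by
  obtain ⟨ht0, ht1⟩ := ht
  have hs : 0 < 1 - t := by linarith
  have hcont : Continuous fun θ ↦ (1 - t ^ 2) / (1 - 2 * t * cos θ + t ^ 2) * |θ| ^ α := by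
    refine (continuous_const.div (by fun_prop) fun θ ↦ ?_).mul
      (continuous_abs.rpow_const fun _ ↦ Or.inr hα0)
    exact (lt_of_lt_of_le (pow_pos hs 2) (sq_one_sub_le_poissonDenom (by linarith) θ)).ne'
  rw [integral_neg_self_eq_two_smul_of_even (fun θ ↦ by rw [cos_neg, abs_neg])
    (hcont.intervalIntegrable _ _), smul_eq_mul]
  gcongr
  refine integral_le_of_le_div_mul_rpow_of_le_mul_rpow_sub_two (by linarith) hα1 hs
    (by linarith [pi_gt_three]) (sq_nonneg π) (hcont.intervalIntegrable _ _)
    (fun θ ⟨hθ0, _⟩ ↦ ?_) (fun θ ⟨hsθ, hθπ⟩ ↦ ?_)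
  · rw [abs_of_nonneg hθ0]
    exact mul_le_mul_of_nonneg_right (poissonKernel_le_two_div (by linarith) ht1 θ)
      (rpow_nonneg hθ0 _)
  · have hθ : 0 < θ := hs.trans_le hsθ
    rw [abs_of_pos hθ]
    calc _ ≤ π ^ 2 * (1 - t) / θ ^ 2 * θ ^ α :=
          mul_le_mul_of_nonneg_right (poissonKernel_le_pi_sq_mul_div ht0 ht1.le hθ.ne'
            (by rwa [abs_of_pos hθ])) (rpow_nonneg hθ.le _)
      _ = π ^ 2 * (1 - t) * θ ^ (α - 2) := by
          rw [rpow_sub hθ, rpow_two]; ring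

/-- Poisson-kernel estimate: if `u` on the unit disc satisfies the Poisson
integral bound `u(t') ≤ C' ∫_{-π}^{π} (1-t'²)/|e^{iθ}-t'|² |θ|^α dθ` for
`t' ∈ [1/2, 1)`, with `0 < α < 1`, then there is `c > 0` (depending only on
`α` and `C'`) with `u(t') ≤ c (1-t')^α` for all `t' ∈ [1/2, 1)`. -/
theorem stmt6 (α C' : ℝ) (hα : 0 < α) (hα1 : α < 1) (hC' : 0 < C')
    (u : ℂ → ℝ)
    (hu : ∀ t' ∈ Set.Ico (1/2 : ℝ) 1,
      u (t' : ℂ) ≤ C' * ∫ θ in (-π)..π,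
        (1 - t' ^ 2) / ‖Complex.exp (θ * Complex.I) - (t' : ℂ)‖ ^ 2
          * |θ| ^ α) :
    ∃ c > 0, ∀ t' ∈ Set.Ico (1/2 : ℝ) 1, u (t' : ℂ) ≤ c * (1 - t') ^ α := by
  have hK : 0 < 2 / (α + 1) + π ^ 2 / (1 - α) := by
    have : 0 < 1 - α := by linarith
    positivity
  refine ⟨C' * (2 * (2 / (α + 1) + π ^ 2 / (1 - α))), by positivity, fun t' ht ↦ ?_⟩
  calc u t' ≤ C' * ∫ θ in -π..π, (1 - t' ^ 2) / (1 - 2 * t' * cos θ + t' ^ 2) * |θ| ^ α := by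
        simpa only [norm_exp_ofReal_mul_I_sub_ofReal_sq] using hu t' ht
    _ ≤ C' * (2 * ((2 / (α + 1) + π ^ 2 / (1 - α)) * (1 - t') ^ α)) := by
        gcongr; exact integral_poissonKernel_mul_abs_rpow_le hα.le hα1 ht
    _ = C' * (2 * (2 / (α + 1) + π ^ 2 / (1 - α))) * (1 - t') ^ α := by ring
end
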